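/- Let v ∈ ℝ^d be a fixed vector and let U be a d×b random matrix whose entries are independent standard normal random variables. Then for any 0 < δ < 1, with probability at least 1 − δ, ‖Uᵀv‖² ≥ (b − 2√(b·log(1/δ)))·‖v‖². -/

import Mathlib

open MeasureTheory ProbabilityTheory Matrix
open scoped BigOperators RealInnerProductSpace

noncomputable section

abbrev Vec (d : ℕ) := EuclideanSpace ℝ (Fin d)
abbrev Mat (d : ℕ) := Matrix (Fin d) (Fin d) ℝ

/-- View a Euclidean vector as a plain function. -/
def toPi {d : ℕ} (u : Vec d) : Fin d → ℝ := u
/-- View a plain function as a Euclidean vector. -/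
def ofPi {d : ℕ} (u : Fin d → ℝ) : Vec d := WithLp.toLp 2 u

/-- Matrix-vector multiplication on Euclidean space. -/
def mvec {d : ℕ} (A : Mat d) (u : Vec d) : Vec d := ofPi (A.mulVec (toPi u))

/-- The standard Gaussian measure N(0, I_d) on ℝ^d. -/
def gaussD (d : ℕ) : Measure (Vec d) :=
  (Measure.pi fun _ : Fin d => gaussianReal 0 1).map (MeasurableEquiv.toLp 2 (Fin d → ℝ))

/-- Frobenius norm of a matrix. -/
def matFrobNorm {m n : ℕ} (A : Matrix (Fin m) (Fin n) ℝ) : ℝ :=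
  Real.sqrt (∑ i, ∑ j, (A i j) ^ 2)

/-- Operator (spectral) norm of a matrix. -/
def matOpNorm {m n : ℕ} (A : Matrix (Fin m) (Fin n) ℝ) : ℝ :=
  ‖LinearMap.toContinuousLinearMap (Matrix.toEuclideanLin A)‖

/-- Loewner order `A ⪯ B`. -/
def loeLE {d : ℕ} (A B : Mat d) : Prop := (B - A).PosSemidef

/-- Hessian matrix of `f` at `x`. -/
def hess {d : ℕ} (f : Vec d → ℝ) (x : Vec d) : Mat d :=
  Matrix.of fun i j =>
    iteratedFDeriv ℝ 2 f x ![EuclideanSpace.single i 1, EuclideanSpace.single j 1]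

/-- Membership in `S = {Σ symmetric : ζ⁻¹ I ⪯ Σ ⪯ τ⁻¹ I}`. -/
def Smem {d : ℕ} (τ ζ : ℝ) (A : Mat d) : Prop :=
  A.IsSymm ∧ loeLE (ζ⁻¹ • 1) A ∧ loeLE A (τ⁻¹ • 1)

/-- Membership in `S' = {A symmetric : τ I ⪯ A ⪯ ζ I}`. -/
def S'mem {d : ℕ} (τ ζ : ℝ) (A : Mat d) : Prop :=
  A.IsSymm ∧ loeLE (τ • 1) A ∧ loeLE A (ζ • 1)

/-- Square root of a positive semidefinite matrix (the former `Matrix.PosSemidef.sqrt`). -/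
def psdSqrt {d : ℕ} {S : Mat d} (hS : S.PosSemidef) : Mat d :=
  hS.1.eigenvectorUnitary.1 * Matrix.diagonal ((↑) ∘ Real.sqrt ∘ hS.1.eigenvalues) *
    (star hS.1.eigenvectorUnitary : Mat d)

/-- The regularized reparameterized objective `Q_α(μ, Σ)`. -/
def Qa {d : ℕ} (f : Vec d → ℝ) (α : ℝ) (μ : Vec d) (S : Mat d) (hS : S.PosSemidef) : ℝ :=
  (∫ u, f (μ + α • mvec (psdSqrt hS) u) ∂ gaussD d) - α ^ 2 / 2 * Real.log S.det

/-! For fixed `v` the variables `⟪uᵢ, v⟫` are i.i.d. `N(0, ‖v‖²)`, so `S = ∑ᵢ ⟪uᵢ, v⟫²` has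
`E exp(-λS) = (1 + 2λ‖v‖²)^(-b/2)`. The Chernoff bound for the lower tail at `c‖v‖²`, with
`λ‖v‖² = κ = √(L/b)` and `L = log(1/δ)`, gives `P(S ≤ c‖v‖²) ≤ exp(κc - (b/2) log(1 + 2κ))`.
For `c = b - 2√(bL)` we have `κc = κb - 2L`, and `log(1 + x) ≥ x - x²/2` bounds the exponent by
`κb - 2L - b(κ - κ²) = -L`. -/

open Real

-- For `2tv ≥ 1` both sides are the junk value `0`.
lemma mgf_sq_gaussianReal (v : NNReal) (t : ℝ) :
    mgf (fun x => x ^ 2) (gaussianReal 0 v) t = (√(1 - 2 * t * v))⁻¹ := by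
  rcases eq_or_ne v 0 with rfl | hv
  · simp [mgf, gaussianReal_zero_var]
  have hpdf : ∀ x, gaussianPDFReal 0 v x * exp (t * x ^ 2)
      = (√(2 * π * v))⁻¹ * exp (-((1 - 2 * t * v) / (2 * v)) * x ^ 2) := by
    intro x
    rw [gaussianPDFReal, mul_assoc, ← exp_add]
    congr 2
    field_simp
    ring
  rw [mgf, integral_gaussianReal_eq_integral_smul hv]
  simp_rw [smul_eq_mul, hpdf, integral_const_mul, integral_gaussian, div_div_eq_mul_div]
  have hsqrt : √(2 * π * v) ≠ 0 := by positivity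
  rw [show π * (2 * v) = 2 * π * v by ring, sqrt_div (by positivity)]
  field_simp

lemma stdGaussian_map_inner {E : Type*} [NormedAddCommGroup E] [InnerProductSpace ℝ E]
    [FiniteDimensional ℝ E] [MeasurableSpace E] [BorelSpace E] (v : E) :
    (stdGaussian E).map (fun u => ⟪u, v⟫) = gaussianReal 0 (‖v‖₊ ^ 2) := by
  have h := IsGaussian.map_eq_gaussianReal (μ := stdGaussian E) (innerSL ℝ v)
  simp only [integral_strongDual_stdGaussian, variance_dual_stdGaussian, innerSL_apply_norm] at h
  convert h using 2
  · ext u; simp [real_inner_comm]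
  · ext; simp

lemma gaussD_eq_stdGaussian (d : ℕ) : gaussD d = stdGaussian (Vec d) :=
  map_pi_eq_stdGaussian

lemma mgf_sum_pi {Ω ι : Type*} [MeasurableSpace Ω] [Fintype ι] {μ : Measure Ω} [SigmaFinite μ]
    (X : Ω → ℝ) (t : ℝ) :
    mgf (fun ω : ι → Ω => ∑ i, X (ω i)) (Measure.pi fun _ => μ) t
      = mgf X μ t ^ Fintype.card ι := by
  simp only [mgf, Finset.mul_sum, Real.exp_sum]
  exact integral_fintype_prod_eq_pow (fun x => exp (t * X x))

instance (d : ℕ) : IsProbabilityMeasure (gaussD d) := by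
  rw [gaussD_eq_stdGaussian]; infer_instance

lemma mgf_sum_inner_sq_gaussD {d b : ℕ} (v : Vec d) (t : ℝ) :
    mgf (fun U : Fin b → Vec d => ∑ i, ⟪U i, v⟫ ^ 2) (Measure.pi fun _ => gaussD d) t
      = (√(1 - 2 * t * ‖v‖ ^ 2))⁻¹ ^ b := by
  have hmap : mgf (fun u : Vec d => ⟪u, v⟫ ^ 2) (gaussD d) t
      = mgf (fun x => x ^ 2) ((gaussD d).map fun u => ⟪u, v⟫) t :=
    (mgf_map (Y := fun u : Vec d => ⟪u, v⟫) (X := fun x => x ^ 2) (by fun_prop)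
      (by fun_prop)).symm
  rw [mgf_sum_pi (fun u : Vec d => ⟪u, v⟫ ^ 2), Fintype.card_fin, hmap, gaussD_eq_stdGaussian,
    stdGaussian_map_inner, mgf_sq_gaussianReal]
  simp

lemma measureReal_sum_inner_sq_le {d b : ℕ} {v : Vec d} (hv : v ≠ 0) {κ : ℝ} (hκ : 0 ≤ κ)
    (c : ℝ) :
    (Measure.pi fun _ : Fin b => gaussD d).real {U | ∑ i, ⟪U i, v⟫ ^ 2 ≤ c * ‖v‖ ^ 2}
      ≤ exp (κ * c) * (√(1 + 2 * κ))⁻¹ ^ b := by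
  have hv2 : 0 < ‖v‖ ^ 2 := by positivity
  set t := -κ / ‖v‖ ^ 2 with ht
  have hmgf := mgf_sum_inner_sq_gaussD (b := b) v t
  rw [show 1 - 2 * t * ‖v‖ ^ 2 = 1 + 2 * κ by rw [ht]; field_simp; ring] at hmgf
  have hint : Integrable (fun U : Fin b → Vec d => exp (t * ∑ i, ⟪U i, v⟫ ^ 2))
      (Measure.pi fun _ => gaussD d) := by
    -- otherwise the mgf would be the junk value `0`
    by_contra h
    have h0 := hmgf.symm.trans (mgf_undef h)
    have : 0 < (√(1 + 2 * κ))⁻¹ ^ b := by positivity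
    exact this.ne' h0
  calc _ ≤ exp (-t * (c * ‖v‖ ^ 2)) * _ :=
        measure_le_le_exp_mul_mgf _ (div_nonpos_of_nonpos_of_nonneg (by linarith) hv2.le) hint
    _ = _ := by
      rw [hmgf, ht]
      congr 2
      field_simp

lemma exp_mul_inv_sqrt_pow_le {b : ℕ} (hb : 0 < b) {t : ℝ} (ht : 0 ≤ t) :
    exp (√(t / b) * (b - 2 * √(b * t))) * (√(1 + 2 * √(t / b)))⁻¹ ^ b ≤ exp (-t) := by
  set κ := √(t / b) with hκ
  have hb' : (0 : ℝ) < b := by exact_mod_cast hb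
  have hκ0 : 0 ≤ κ := sqrt_nonneg _
  have hbκ2 : b * κ ^ 2 = t := by rw [hκ, sq_sqrt (by positivity)]; field_simp
  have hκt : κ * √(b * t) = t := by
    rw [hκ, ← sqrt_mul (by positivity), show t / b * (b * t) = t ^ 2 by field_simp, sqrt_sq ht]
  have hlog : 2 * κ - 2 * κ ^ 2 ≤ log (1 + 2 * κ) := by
    refine le_trans ?_ (le_log_one_add_of_nonneg (by positivity))
    rw [le_div_iff₀ (by positivity)]
    nlinarith [pow_nonneg hκ0 3]
  have hpow : (√(1 + 2 * κ))⁻¹ ^ b = exp (-(b * (log (1 + 2 * κ) / 2))) := by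
    rw [exp_neg, exp_nat_mul, ← log_sqrt (by positivity), exp_log (by positivity), inv_pow]
  rw [hpow, ← exp_add, exp_le_exp]
  nlinarith

lemma ofReal_one_sub_le_measure_of_compl_subset {Ω : Type*} [MeasurableSpace Ω] {μ : Measure Ω}
    [IsProbabilityMeasure μ] {s t : Set Ω} (hst : sᶜ ⊆ t) {δ : ℝ} (ht : μ.real t ≤ δ) :
    ENNReal.ofReal (1 - δ) ≤ μ s := by
  have hδ : μ sᶜ ≤ ENNReal.ofReal δ :=
    (measure_mono hst).trans (ofReal_measureReal (μ := μ) (s := t) ▸ ENNReal.ofReal_le_ofReal ht)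
  calc ENNReal.ofReal (1 - δ) ≤ 1 - ENNReal.ofReal δ := by
        rw [← ENNReal.ofReal_one, ← ENNReal.ofReal_sub _ (measureReal_nonneg.trans ht)]
    _ ≤ 1 - μ sᶜ := tsub_le_tsub_left hδ 1
    _ ≤ μ s := by
      rw [tsub_le_iff_right, ← measure_univ (μ := μ)]
      exact measure_univ_le_add_compl s

theorem stmt9_general {d b : ℕ} (hb : 1 ≤ b) (v : Vec d)
    (δ : ℝ) (hδ0 : 0 < δ) (hδ1 : δ < 1) :
    ENNReal.ofReal (1 - δ)
      ≤ (Measure.pi fun _ : Fin b => gaussD d)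
          {U : Fin b → Vec d |
            ((b : ℝ) - 2 * Real.sqrt ((b : ℝ) * Real.log (1 / δ))) * ‖v‖ ^ 2
              ≤ ∑ i, ⟪U i, v⟫ ^ 2} := by
  rcases eq_or_ne v 0 with rfl | hv
  · simpa using hδ0.le
  have hlog : 0 ≤ log (1 / δ) := log_nonneg (one_le_one_div hδ0 hδ1.le)
  have hlower : (Measure.pi fun _ : Fin b => gaussD d).real
      {U | ∑ i, ⟪U i, v⟫ ^ 2 ≤ (b - 2 * √(b * log (1 / δ))) * ‖v‖ ^ 2} ≤ δ :=
    calc _ ≤ _ := measureReal_sum_inner_sq_le hv (sqrt_nonneg (log (1 / δ) / b)) _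
      _ ≤ exp (-log (1 / δ)) := exp_mul_inv_sqrt_pow_le hb hlog
      _ = δ := by rw [one_div, log_inv, neg_neg, exp_log hδ0]
  refine ofReal_one_sub_le_measure_of_compl_subset (fun U hU => ?_) hlower
  exact (not_le.mp (Set.notMem_ofPred_iff.mp hU)).le

/-- for a fixed `v ∈ ℝ^d` and a `d×b` matrix `U` with i.i.d. standard
normal entries (equivalently, i.i.d. standard Gaussian columns `u₁, …, u_b`), with
probability at least `1 − δ` one has `‖Uᵀv‖² ≥ (b − 2√(b log(1/δ)))‖v‖²`. -/
theorem stmt9 {d b : ℕ} (hd : 1 ≤ d) (hb : 1 ≤ b) (v : Vec d)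
    (δ : ℝ) (hδ0 : 0 < δ) (hδ1 : δ < 1) :
    ENNReal.ofReal (1 - δ)
      ≤ (Measure.pi fun _ : Fin b => gaussD d)
          {U : Fin b → Vec d |
            ((b : ℝ) - 2 * Real.sqrt ((b : ℝ) * Real.log (1 / δ))) * ‖v‖ ^ 2
              ≤ ∑ i, ⟪U i, v⟫ ^ 2} :=
  stmt9_general hb v δ hδ0 hδ1
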